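/- Let α ∈ (0, 1/2], β ∈ [0, α/2), and let S be an (α,β)-admissible N×N real matrix (N ≥ 2). Then for every x in the convex hull of V̄, the vector (S⊗I₂)ᵀ x lies in (1 − α + 2β) · (convex hull of V̄); in particular, (S⊗I₂)ᵀ maps the convex hull of V̄ into a proper subset of itself. -/

import Mathlib

/-!
The hull `conv V̄` is exactly the set of vectors whose two columns sum to zero and whose
`ℓ¹` norm is at most `1`: a column `y` with `∑ y = 0` and `s = ∑ y⁺` decomposes as
`y = ∑_{p,q} (y_p⁺ y_q⁻ / s) (e_p - e_q)`, with total weight `2 s = ‖y‖₁`.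
Since the rows of `S` sum to `1`, `(S ⊗ I₂)ᵀ` preserves zero column sums, and it sends
`v_{p,q,j}` to the column `(S_p - S_q) / 2`. Writing `|a - b| = a + b - 2 min a b`, the column
shared by rows `p` and `q` bounds `‖S_p - S_q‖₁` by `2 (1 - α + 2β)`. By linearity the image of
the hull lies in the ball of radius `1 - α + 2β < 1`, which contains no vertex.
-/

open Finset Pointwise

/-- The vertex set `V̄` of vectors `v_{p,q,j}` with `p ≠ q`, `j ∈ {1,2}`. -/
def vertexSetVbar (N : ℕ) : Set (Fin N × Fin 2 → ℝ) :=
  {v | ∃ p q : Fin N, ∃ j : Fin 2, p ≠ q ∧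
    v = fun il => if il = (p, j) then (1 / 2 : ℝ) else if il = (q, j) then -(1 / 2 : ℝ) else 0}

/-- The action of `(S ⊗ I₂)ᵀ` on `ℝ^{2N}`: `((S⊗I₂)ᵀ x)(i,j) = ∑ k, S k i * x (k,j)`. -/
def kronTr {N : ℕ} (S : Matrix (Fin N) (Fin N) ℝ) (x : Fin N × Fin 2 → ℝ) :
    Fin N × Fin 2 → ℝ :=
  fun il => ∑ k, S k il.1 * x (k, il.2)

/-- An `N × N` real matrix `S` is `(α,β)`-admissible if every row sums to `1`,
the negative part of every row sums to at least `-β`, and every pair of distinct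
rows shares a column where both entries are at least `α` (neighbor-shared). -/
def Admissible {N : ℕ} (α β : ℝ) (S : Matrix (Fin N) (Fin N) ℝ) : Prop :=
  (∀ i, ∑ j, S i j = 1) ∧ (∀ i, -β ≤ ∑ j, min (S i j) 0) ∧
    (∀ p q : Fin N, p ≠ q → ∃ i, α ≤ S p i ∧ α ≤ S q i)

theorem Convex.sum_mem_of_sum_le_one {𝕜 E ι : Type*} [Field 𝕜] [LinearOrder 𝕜]
    [IsStrictOrderedRing 𝕜] [AddCommGroup E] [Module 𝕜 E] {C : Set E} (hC : Convex 𝕜 C)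
    (h0 : (0 : E) ∈ C) {t : Finset ι} {w : ι → 𝕜} {v : ι → E} (hw : ∀ i ∈ t, 0 ≤ w i)
    (hw₁ : ∑ i ∈ t, w i ≤ 1) (hv : ∀ i ∈ t, v i ∈ C) : ∑ i ∈ t, w i • v i ∈ C := by
  rcases (sum_nonneg hw).eq_or_lt with hsum | hsum
  · rw [sum_eq_zero fun i hi => by rw [(sum_eq_zero_iff_of_nonneg hw).1 hsum.symm i hi, zero_smul]]
    exact h0
  · simpa [Finset.centerMass, smul_inv_smul₀ hsum.ne'] using
      hC.smul_mem_of_zero_mem h0 (hC.centerMass_mem hw hsum hv) ⟨hsum.le, hw₁⟩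

section Vectors
variable {ι : Type*} [Fintype ι]

theorem convex_setOf_sum_abs_le (r : ℝ) : Convex ℝ {x : ι → ℝ | ∑ i, |x i| ≤ r} := by
  intro x (hx : ∑ i, |x i| ≤ r) y (hy : ∑ i, |y i| ≤ r) a b ha hb hab
  calc ∑ i, |a * x i + b * y i| ≤ ∑ i, (a * |x i| + b * |y i|) := by
        gcongr with i
        exact (abs_add_le _ _).trans_eq (by rw [abs_mul, abs_mul, abs_of_nonneg ha, abs_of_nonneg hb])
    _ = a * ∑ i, |x i| + b * ∑ i, |y i| := by rw [sum_add_distrib, mul_sum, mul_sum]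
    _ ≤ a * r + b * r := by gcongr
    _ = r := by rw [← add_mul, hab, one_mul]

theorem sum_abs_sub_le_of_shared_entry {α β : ℝ} {r s : ι → ℝ} (hr : ∑ i, r i = 1)
    (hs : ∑ i, s i = 1) (hr' : -β ≤ ∑ i, min (r i) 0) (hs' : -β ≤ ∑ i, min (s i) 0) {i₀ : ι}
    (hri : α ≤ r i₀) (hsi : α ≤ s i₀) : ∑ i, |r i - s i| ≤ 2 * (1 - α + 2 * β) := by
  classical
  have hmin : ∀ i, min (r i) 0 + min (s i) 0 + (if i = i₀ then α else 0) ≤ min (r i) (s i) := by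
    intro i
    have := min_le_left (r i) 0; have := min_le_right (r i) 0
    have := min_le_left (s i) 0; have := min_le_right (s i) 0
    split_ifs with h
    · subst h; exact le_min (by linarith) (by linarith)
    · exact le_min (by linarith) (by linarith)
  have habs : ∀ i, |r i - s i| = r i + s i - 2 * min (r i) (s i) := by
    intro i
    rcases le_total (r i) (s i) with h | h
    · rw [abs_of_nonpos (by linarith), min_eq_left h]; ring
    · rw [abs_of_nonneg (by linarith), min_eq_right h]; ring
  have hsum_min := sum_le_sum fun i (_ : i ∈ univ) => hmin i
  simp only [sum_add_distrib, sum_ite_eq', mem_univ, if_true] at hsum_min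
  simp only [habs, sum_sub_distrib, sum_add_distrib, ← mul_sum, hr, hs]
  linarith

theorem sum_negPart_eq_sum_posPart {y : ι → ℝ} (hy : ∑ i, y i = 0) :
    ∑ i, (y i)⁻ = ∑ i, (y i)⁺ := by
  have : ∑ i, ((y i)⁺ - (y i)⁻) = 0 := by simpa only [posPart_sub_negPart] using hy
  rw [sum_sub_distrib] at this
  linarith

theorem eq_zero_of_sum_eq_zero_of_sum_posPart_eq_zero {y : ι → ℝ} (hy : ∑ i, y i = 0)
    (hpos : ∑ i, (y i)⁺ = 0) : y = 0 := by
  have hneg := (sum_negPart_eq_sum_posPart hy).trans hpos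
  funext i
  rw [Pi.zero_apply, ← posPart_sub_negPart (y i),
    (sum_eq_zero_iff_of_nonneg fun k _ => posPart_nonneg (y k)).1 hpos i (mem_univ i),
    (sum_eq_zero_iff_of_nonneg fun k _ => negPart_nonneg (y k)).1 hneg i (mem_univ i), sub_zero]

end Vectors

def zeroColSumL1Ball (n m : Type*) [Fintype n] [Fintype m] (r : ℝ) : Set (n × m → ℝ) :=
  {x | (∀ j, ∑ i, x (i, j) = 0) ∧ ∑ il, |x il| ≤ r}

section Columns
variable {n m : Type*} [Fintype n] [Fintype m]

theorem convex_zeroColSumL1Ball (r : ℝ) : Convex ℝ (zeroColSumL1Ball n m r) := by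
  refine Convex.inter (fun x hx y hy a b _ _ _ j => ?_) (convex_setOf_sum_abs_le r)
  simp [sum_add_distrib, ← mul_sum, hx j, hy j]

theorem zeroColSumL1Ball_mono {r r' : ℝ} (h : r ≤ r') :
    zeroColSumL1Ball n m r ⊆ zeroColSumL1Ball n m r' :=
  fun _ hx => ⟨hx.1, hx.2.trans h⟩

theorem smul_zeroColSumL1Ball {c : ℝ} (hc : 0 < c) (r : ℝ) :
    c • zeroColSumL1Ball n m r = zeroColSumL1Ball n m (c * r) := by
  ext x
  simp [Set.mem_smul_set_iff_inv_smul_mem₀ hc.ne', zeroColSumL1Ball, ← mul_sum, abs_mul,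
    abs_of_pos hc, inv_mul_le_iff₀ hc, hc.ne']

theorem sum_posPart_mul_negPart_div {x : n × m → ℝ} (hx : ∀ j, ∑ i, x (i, j) = 0) :
    ∑ j, ∑ p, ∑ q, 2 * ((x (p, j))⁺ * (x (q, j))⁻ / ∑ i, (x (i, j))⁺) = ∑ il, |x il| := by
  rw [Fintype.sum_prod_type_right]
  refine sum_congr rfl fun j _ => ?_
  simp only [← mul_sum, ← sum_div, ← sum_mul, sum_negPart_eq_sum_posPart (hx j),
    mul_self_div_self, ← posPart_add_negPart, sum_add_distrib]
  ring

end Columns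

section VbarVec
variable {n m : Type*} [DecidableEq n] [DecidableEq m]

-- `v_{p,q,j}`; unlike the formula in `vertexSetVbar`, this vanishes when `p = q`.
noncomputable def vbarVec (p q : n) (j : m) : n × m → ℝ :=
  (2⁻¹ : ℝ) • (Pi.single (p, j) 1 - Pi.single (q, j) 1)

theorem vbarVec_swap (p q : n) (j : m) : vbarVec q p j = -vbarVec p q j := by
  rw [vbarVec, vbarVec, ← smul_neg, neg_sub]

theorem sum_vbarVec_apply [Fintype n] (p q : n) (j l : m) : ∑ i, vbarVec p q j (i, l) = 0 := by
  by_cases hl : l = j <;> simp [vbarVec, Pi.single_apply, hl, ← mul_sum, sum_sub_distrib]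

theorem sum_abs_vbarVec [Fintype n] [Fintype m] {p q : n} (h : p ≠ q) (j : m) :
    ∑ il, |vbarVec p q j il| = 1 := by
  rw [Fintype.sum_eq_add (p, j) (q, j) (by simpa using h)]
  · norm_num [vbarVec, h, h.symm]
  · rintro il ⟨hp, hq⟩
    simp [vbarVec, hp, hq]

theorem eq_sum_smul_vbarVec [Fintype n] [Fintype m] {x : n × m → ℝ}
    (hx : ∀ j, ∑ i, x (i, j) = 0) :
    x = ∑ j, ∑ p, ∑ q, (2 * ((x (p, j))⁺ * (x (q, j))⁻ / ∑ i, (x (i, j))⁺)) • vbarVec p q j := by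
  have two_mul_mul_inv_two (a : ℝ) : 2 * a * 2⁻¹ = a := by ring
  funext ⟨i, l⟩
  simp only [vbarVec, smul_smul, two_mul_mul_inv_two, Finset.sum_apply, Pi.smul_apply,
    Pi.sub_apply, Pi.single_apply, Prod.mk.injEq, ite_and, smul_eq_mul, mul_sub, mul_ite, mul_one,
    mul_zero, sum_sub_distrib, sum_ite_irrel, sum_const_zero, sum_ite_eq, mem_univ, ↓reduceIte]
  rw [← sum_div, ← sum_div, ← mul_sum, ← sum_mul, sum_negPart_eq_sum_posPart (hx l), ← sub_div,
    mul_comm, ← mul_sub, posPart_sub_negPart]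
  rcases eq_or_ne (∑ k, (x (k, l))⁺) 0 with hs | hs
  · rw [hs, zero_mul, zero_div,
      congrFun (eq_zero_of_sum_eq_zero_of_sum_posPart_eq_zero (y := fun k => x (k, l)) (hx l) hs) i,
      Pi.zero_apply]
  · rw [mul_div_cancel_left₀ _ hs]

end VbarVec

section VertexSetVbar
variable {N : ℕ}

theorem mem_vertexSetVbar {v : Fin N × Fin 2 → ℝ} :
    v ∈ vertexSetVbar N ↔ ∃ p q j, p ≠ q ∧ vbarVec p q j = v := by
  refine exists₃_congr fun p q j => and_congr_right fun h => ?_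
  suffices (fun il => if il = (p, j) then (1 / 2 : ℝ) else if il = (q, j) then -(1 / 2) else 0) =
      vbarVec p q j by rw [this, eq_comm]
  funext il
  by_cases hp : il = (p, j) <;> by_cases hq : il = (q, j)
  · exact absurd (hp.symm.trans hq) (by simpa using h)
  all_goals simp [vbarVec, hp, hq, h, h.symm]

theorem zero_mem_convexHull_vertexSetVbar (hN : 2 ≤ N) :
    (0 : Fin N × Fin 2 → ℝ) ∈ convexHull ℝ (vertexSetVbar N) := by
  have h01 : (⟨0, by omega⟩ : Fin N) ≠ ⟨1, by omega⟩ := by simp [Fin.ext_iff]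
  have hv := subset_convexHull ℝ _ (mem_vertexSetVbar.2 ⟨_, _, 0, h01, rfl⟩)
  have hw := subset_convexHull ℝ _ (mem_vertexSetVbar.2 ⟨_, _, 0, h01.symm, rfl⟩)
  have hmid := convex_convexHull ℝ _ hv hw (by norm_num : (0 : ℝ) ≤ 2⁻¹)
    (by norm_num : (0 : ℝ) ≤ 2⁻¹) (by norm_num)
  rwa [vbarVec_swap, smul_neg, neg_add_cancel] at hmid

theorem vbarVec_mem_convexHull_vertexSetVbar (hN : 2 ≤ N) (p q : Fin N) (j : Fin 2) :
    vbarVec p q j ∈ convexHull ℝ (vertexSetVbar N) := by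
  rcases eq_or_ne p q with rfl | h
  · simpa [vbarVec] using zero_mem_convexHull_vertexSetVbar hN
  · exact subset_convexHull ℝ _ (mem_vertexSetVbar.2 ⟨p, q, j, h, rfl⟩)

theorem convexHull_vertexSetVbar (hN : 2 ≤ N) :
    convexHull ℝ (vertexSetVbar N) = zeroColSumL1Ball (Fin N) (Fin 2) 1 := by
  refine (convexHull_min ?_ (convex_zeroColSumL1Ball 1)).antisymm fun x ⟨hcol, habs⟩ => ?_
  · intro v hv
    obtain ⟨p, q, j, h, rfl⟩ := mem_vertexSetVbar.1 hv
    exact ⟨sum_vbarVec_apply p q j, (sum_abs_vbarVec h j).le⟩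
  · rw [eq_sum_smul_vbarVec hcol]
    simp only [← Fintype.sum_prod_type']
    refine (convex_convexHull ℝ _).sum_mem_of_sum_le_one (zero_mem_convexHull_vertexSetVbar hN)
      (fun _ _ => by positivity) ?_ fun _ _ => vbarVec_mem_convexHull_vertexSetVbar hN _ _ _
    simpa only [Fintype.sum_prod_type, sum_posPart_mul_negPart_div hcol] using habs

end VertexSetVbar

section KronTr
variable {N : ℕ} (S : Matrix (Fin N) (Fin N) ℝ)

theorem isLinearMap_kronTr : IsLinearMap ℝ (kronTr S) where
  map_add x y := funext fun il => by simp [kronTr, mul_add, sum_add_distrib]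
  map_smul c x := funext fun il => by simp [kronTr, mul_sum, mul_left_comm]

theorem sum_kronTr_apply (hrow : ∀ k, ∑ i, S k i = 1) (x : Fin N × Fin 2 → ℝ) (l : Fin 2) :
    ∑ i, kronTr S x (i, l) = ∑ k, x (k, l) := by
  simp only [kronTr, sum_comm (γ := Fin N), ← sum_mul, hrow, one_mul]

theorem kronTr_vbarVec_apply (p q : Fin N) (j : Fin 2) (i : Fin N) (l : Fin 2) :
    kronTr S (vbarVec p q j) (i, l) = if l = j then (S p i - S q i) / 2 else 0 := by
  by_cases hl : l = j
  · simp only [kronTr, vbarVec, hl, Pi.smul_apply, Pi.sub_apply, Pi.single_apply, Prod.mk.injEq,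
      and_true, smul_eq_mul, mul_sub, mul_ite, mul_one, mul_zero, sum_sub_distrib, sum_ite_eq',
      mem_univ, ↓reduceIte]
    ring
  · simp [kronTr, vbarVec, hl]

theorem sum_abs_kronTr_vbarVec (p q : Fin N) (j : Fin 2) :
    ∑ il, |kronTr S (vbarVec p q j) il| = (∑ i, |S p i - S q i|) / 2 := by
  simp [Fintype.sum_prod_type, kronTr_vbarVec_apply, apply_ite, abs_div, sum_div]

theorem kronTr_image_convexHull_vertexSetVbar_subset {α β : ℝ} (hS : Admissible α β S) :
    kronTr S '' convexHull ℝ (vertexSetVbar N) ⊆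
      zeroColSumL1Ball (Fin N) (Fin 2) (1 - α + 2 * β) := by
  obtain ⟨hrow, hneg, hshare⟩ := hS
  rw [(isLinearMap_kronTr S).image_convexHull]
  refine convexHull_min ?_ (convex_zeroColSumL1Ball _)
  rintro _ ⟨_, hv, rfl⟩
  obtain ⟨p, q, j, h, rfl⟩ := mem_vertexSetVbar.1 hv
  obtain ⟨i₀, hp, hq⟩ := hshare p q h
  refine ⟨fun l => ?_, ?_⟩
  · rw [sum_kronTr_apply S hrow, sum_vbarVec_apply]
  · rw [sum_abs_kronTr_vbarVec]
    linarith [sum_abs_sub_le_of_shared_entry (hrow p) (hrow q) (hneg p) (hneg q) hp hq]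

end KronTr

theorem kronTr_maps_convexHull_Vbar_contractively {N : ℕ} (hN : 2 ≤ N)
    (α β : ℝ) (hα : 0 < α ∧ α ≤ 1 / 2) (hβ : 0 ≤ β ∧ β < α / 2)
    (S : Matrix (Fin N) (Fin N) ℝ) (hS : Admissible α β S) :
    (∀ x ∈ convexHull ℝ (vertexSetVbar N),
      kronTr S x ∈ (1 - α + 2 * β) • convexHull ℝ (vertexSetVbar N)) ∧
    kronTr S '' convexHull ℝ (vertexSetVbar N) ⊂ convexHull ℝ (vertexSetVbar N) := by
  have hc₀ : 0 < 1 - α + 2 * β := by linarith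
  have hc₁ : 1 - α + 2 * β < 1 := by linarith
  have himage := kronTr_image_convexHull_vertexSetVbar_subset S hS
  rw [convexHull_vertexSetVbar hN] at himage ⊢
  rw [smul_zeroColSumL1Ball hc₀, mul_one]
  refine ⟨fun x hx => himage ⟨x, hx, rfl⟩,
    (Set.ssubset_iff_of_subset (himage.trans (zeroColSumL1Ball_mono hc₁.le))).2 ?_⟩
  have h01 : (⟨0, by omega⟩ : Fin N) ≠ ⟨1, by omega⟩ := by simp [Fin.ext_iff]
  have hvertex := sum_abs_vbarVec h01 (0 : Fin 2)
  exact ⟨vbarVec _ _ 0, ⟨sum_vbarVec_apply _ _ 0, hvertex.le⟩,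
    fun hv => by linarith [(himage hv).2]⟩
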